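/- Let n = 1, so V : [a,b] → ℝ is a continuous scalar potential. Let (θ₁,θ₂) ⊆ (0,π) or (θ₁,θ₂) ⊆ (π,2π), and let (λ, u) be a C¹ eigenvalue branch on (θ₁,θ₂) with u(θ,·) not identically zero for each θ. Then λ is strictly monotone on (θ₁,θ₂). -/

import Mathlib

/-!
Green's identity between the eigenfunctions at `θ` and at a nearby `η`, divided by `η - θ` and
passed to the limit, gives the Hellmann–Feynman formula `λ'(θ) ‖u‖² = i W(u, u)(a)`, where
`W(u, v) = u v̄' - u' v̄`. For a real potential `W(u, u)` is constant on `[a, b]`; if it vanished,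
`ū(x₀) u - u(x₀) ū` would solve the equation with zero Cauchy data at `x₀`, so `u` would be a
constant multiple of a real solution, and the boundary condition with `e^{iθ} ∉ ℝ` would force
`u = 0`. Hence `λ'` never vanishes, and by Darboux's theorem it has constant sign.
-/

open Set

noncomputable section

/-- `u` (with derivatives `u'`, `u''` on `[a,b]`) is a scalar `(λ,θ)`-eigenfunction:
`-u'' + Vu = λu` on `[a,b]` with `θ`-periodic boundary conditions. -/
def IsEig1 (a b : ℝ) (V : ℝ → ℝ) (lam θ : ℝ) (u u' u'' : ℝ → ℂ) : Prop :=
  (∀ x ∈ Icc a b, HasDerivWithinAt u (u' x) (Icc a b) x) ∧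
  (∀ x ∈ Icc a b, HasDerivWithinAt u' (u'' x) (Icc a b) x) ∧
  (∀ x ∈ Icc a b, -u'' x + (V x : ℂ) * u x = (lam : ℂ) * u x) ∧
  u b = Complex.exp (θ * Complex.I) * u a ∧
  u' b = Complex.exp (θ * Complex.I) * u' a

/-- `(lam, u)` (with the indicated partial derivatives) is a scalar C¹ eigenvalue branch
on `(θ₁,θ₂)`. -/
def IsBranch1 (a b : ℝ) (V : ℝ → ℝ) (θ₁ θ₂ : ℝ)
    (lam lam' : ℝ → ℝ) (u ux uxx uθ uθx : ℝ → ℝ → ℂ) : Prop :=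
  (∀ θ ∈ Ioo θ₁ θ₂, HasDerivWithinAt lam (lam' θ) (Ioo θ₁ θ₂) θ) ∧
  (∀ θ ∈ Ioo θ₁ θ₂, IsEig1 a b V (lam θ) θ (u θ) (ux θ) (uxx θ)) ∧
  (∀ θ ∈ Ioo θ₁ θ₂, ∀ x ∈ Icc a b,
      HasDerivWithinAt (fun t => u t x) (uθ θ x) (Ioo θ₁ θ₂) θ) ∧
  (∀ θ ∈ Ioo θ₁ θ₂, ∀ x ∈ Icc a b,
      HasDerivWithinAt (fun t => ux t x) (uθx θ x) (Ioo θ₁ θ₂) θ) ∧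
  ContinuousOn (fun p : ℝ × ℝ => uθ p.1 p.2) (Ioo θ₁ θ₂ ×ˢ Icc a b) ∧
  ContinuousOn (fun p : ℝ × ℝ => uθx p.1 p.2) (Ioo θ₁ θ₂ ×ˢ Icc a b)

open Filter Topology Complex ComplexConjugate

structure IsSchrodingerSolution (a b : ℝ) (V : ℝ → ℝ) (lam : ℝ) (u u' u'' : ℝ → ℂ) : Prop where
  hasDerivWithinAt : ∀ x ∈ Icc a b, HasDerivWithinAt u (u' x) (Icc a b) x
  hasDerivWithinAt_deriv : ∀ x ∈ Icc a b, HasDerivWithinAt u' (u'' x) (Icc a b) x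
  deriv_deriv_eq : ∀ x ∈ Icc a b, u'' x = (V x - lam) * u x

theorem IsEig1.isSchrodingerSolution {a b : ℝ} {V : ℝ → ℝ} {lam θ : ℝ} {u u' u'' : ℝ → ℂ}
    (h : IsEig1 a b V lam θ u u' u'') : IsSchrodingerSolution a b V lam u u' u'' :=
  ⟨h.1, h.2.1, fun x hx => by linear_combination -h.2.2.1 x hx⟩

def conjWronskian (u u' v v' : ℝ → ℂ) (x : ℝ) : ℂ :=
  u x * conj (v' x) - u' x * conj (v x)

namespace IsSchrodingerSolution

variable {a b : ℝ} {V : ℝ → ℝ} {lam μ : ℝ} {u u' u'' v v' v'' : ℝ → ℂ}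

theorem continuousOn (h : IsSchrodingerSolution a b V lam u u' u'') :
    ContinuousOn u (Icc a b) :=
  fun x hx => (h.hasDerivWithinAt x hx).continuousWithinAt

theorem star (h : IsSchrodingerSolution a b V lam u u' u'') :
    IsSchrodingerSolution a b V lam (fun x => conj (u x)) (fun x => conj (u' x))
      (fun x => conj (u'' x)) where
  hasDerivWithinAt x hx := (h.hasDerivWithinAt x hx).star
  hasDerivWithinAt_deriv x hx := (h.hasDerivWithinAt_deriv x hx).star
  deriv_deriv_eq x hx := by simp [h.deriv_deriv_eq x hx]

theorem const_mul (h : IsSchrodingerSolution a b V lam u u' u'') (c : ℂ) :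
    IsSchrodingerSolution a b V lam (fun x => c * u x) (fun x => c * u' x)
      (fun x => c * u'' x) where
  hasDerivWithinAt x hx := (h.hasDerivWithinAt x hx).const_mul c
  hasDerivWithinAt_deriv x hx := (h.hasDerivWithinAt_deriv x hx).const_mul c
  deriv_deriv_eq x hx := by rw [h.deriv_deriv_eq x hx]; ring

theorem sub (h : IsSchrodingerSolution a b V lam u u' u'')
    (hv : IsSchrodingerSolution a b V lam v v' v'') :
    IsSchrodingerSolution a b V lam (fun x => u x - v x) (fun x => u' x - v' x)
      (fun x => u'' x - v'' x) where
  hasDerivWithinAt x hx := (h.hasDerivWithinAt x hx).sub (hv.hasDerivWithinAt x hx)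
  hasDerivWithinAt_deriv x hx :=
    (h.hasDerivWithinAt_deriv x hx).sub (hv.hasDerivWithinAt_deriv x hx)
  deriv_deriv_eq x hx := by rw [h.deriv_deriv_eq x hx, hv.deriv_deriv_eq x hx]; ring

theorem eqOn_zero (h : IsSchrodingerSolution a b V lam u u' u'')
    (hV : ContinuousOn V (Icc a b)) {x₀ : ℝ} (hx₀ : x₀ ∈ Icc a b) (h₀ : u x₀ = 0)
    (h₀' : u' x₀ = 0) : EqOn u 0 (Icc a b) ∧ EqOn u' 0 (Icc a b) := by
  have hc : ContinuousOn (fun x => (V x : ℂ) - lam) (Icc a b) := by fun_prop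
  obtain ⟨M, hM⟩ := isCompact_Icc.exists_bound_of_continuousOn hc
  let v : ℝ → ℂ × ℂ → ℂ × ℂ := fun t y => (y.2, ((V t : ℂ) - lam) * y.1)
  have hv : ∀ t ∈ Icc a b, LipschitzOnWith (max 1 M.toNNReal) (v t) univ := by
    intro t ht
    refine LipschitzWith.lipschitzOnWith ((LipschitzWith.prod_snd.prodMk
      ((lipschitzWith_smul ((V t : ℂ) - lam)).comp LipschitzWith.prod_fst)).weaken ?_)
    rw [mul_one]
    refine max_le_max le_rfl (NNReal.coe_le_coe.1 ?_)
    simpa using Or.inl (hM t ht)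
  let y : ℝ → ℂ × ℂ := fun x => (u x, u' x)
  have hy : ∀ x ∈ Icc a b, HasDerivWithinAt y (v x (y x)) (Icc a b) x := fun x hx => by
    simpa [v, y, h.deriv_deriv_eq x hx] using
      (h.hasDerivWithinAt x hx).prodMk (h.hasDerivWithinAt_deriv x hx)
  have hyc : ContinuousOn y (Icc a b) := fun x hx => (hy x hx).continuousWithinAt
  have hzero : ∀ t (s : Set ℝ), HasDerivWithinAt (fun _ => (0 : ℂ × ℂ)) (v t 0) s t :=
    fun t s => by rw [show v t 0 = 0 by simp [v]]; exact hasDerivWithinAt_const t s 0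
  have hy₀ : y x₀ = 0 := by simp [y, h₀, h₀']
  have hright : EqOn y 0 (Icc x₀ b) :=
    ODE_solution_unique_of_mem_Icc_right (s := fun _ => univ)
      (fun t ht => hv t ⟨hx₀.1.trans ht.1, ht.2.le⟩) (hyc.mono (Icc_subset_Icc_left hx₀.1))
      (fun t ht => (hy t ⟨hx₀.1.trans ht.1, ht.2.le⟩).mono_of_mem_nhdsWithin
        (Icc_mem_nhdsGE_of_mem ⟨hx₀.1.trans ht.1, ht.2⟩))
      (fun _ _ => mem_univ _) continuousOn_const (fun t _ => hzero t _) (fun _ _ => mem_univ _) hy₀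
  have hleft : EqOn y 0 (Icc a x₀) :=
    ODE_solution_unique_of_mem_Icc_left (s := fun _ => univ)
      (fun t ht => hv t ⟨ht.1.le, ht.2.trans hx₀.2⟩) (hyc.mono (Icc_subset_Icc_right hx₀.2))
      (fun t ht => (hy t ⟨ht.1.le, ht.2.trans hx₀.2⟩).mono_of_mem_nhdsWithin
        (Icc_mem_nhdsLE_of_mem ⟨ht.1, ht.2.trans hx₀.2⟩))
      (fun _ _ => mem_univ _) continuousOn_const (fun t _ => hzero t _) (fun _ _ => mem_univ _) hy₀
  have hy0 : EqOn y 0 (Icc a b) := fun x hx =>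
    (le_total x x₀).elim (fun h => hleft ⟨hx.1, h⟩) (fun h => hright ⟨h, hx.2⟩)
  exact ⟨fun x hx => congrArg Prod.fst (hy0 hx), fun x hx => congrArg Prod.snd (hy0 hx)⟩

theorem hasDerivWithinAt_conjWronskian (hu : IsSchrodingerSolution a b V lam u u' u'')
    (hv : IsSchrodingerSolution a b V μ v v' v'') {x : ℝ} (hx : x ∈ Icc a b) :
    HasDerivWithinAt (conjWronskian u u' v v') ((lam - μ) * (u x * conj (v x))) (Icc a b) x := by
  refine (((hu.hasDerivWithinAt x hx).mul (hv.star.hasDerivWithinAt_deriv x hx)).sub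
    ((hu.hasDerivWithinAt_deriv x hx).mul (hv.star.hasDerivWithinAt x hx))).congr_deriv ?_
  simp only [hu.deriv_deriv_eq x hx, hv.deriv_deriv_eq x hx, map_mul, map_sub, conj_ofReal]
  ring

theorem integral_mul_conj (hab : a ≤ b) (hu : IsSchrodingerSolution a b V lam u u' u'')
    (hv : IsSchrodingerSolution a b V μ v v' v'') :
    (lam - μ : ℂ) * ∫ x in a..b, u x * conj (v x) =
      conjWronskian u u' v v' b - conjWronskian u u' v v' a := by
  rw [← intervalIntegral.integral_const_mul]
  refine intervalIntegral.integral_eq_sub_of_hasDerivAt_of_le hab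
    (fun x hx => (hu.hasDerivWithinAt_conjWronskian hv hx).continuousWithinAt)
    (fun x hx => (hu.hasDerivWithinAt_conjWronskian hv (Ioo_subset_Icc_self hx)).hasDerivAt
      (Icc_mem_nhds hx.1 hx.2)) ?_
  exact (continuousOn_const.mul (hu.continuousOn.mul hv.star.continuousOn)).intervalIntegrable_of_Icc
      hab

theorem conjWronskian_self_eq (h : IsSchrodingerSolution a b V lam u u' u'') {x : ℝ}
    (hx : x ∈ Icc a b) : conjWronskian u u' u u' x = conjWronskian u u' u u' a := by
  refine constant_of_has_deriv_right_zero
    (fun y hy => (h.hasDerivWithinAt_conjWronskian h hy).continuousWithinAt) (fun y hy => ?_) x hx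
  simpa using ((h.hasDerivWithinAt_conjWronskian h (Ico_subset_Icc_self hy)).mono_of_mem_nhdsWithin
    (Icc_mem_nhdsGE_of_mem hy))

end IsSchrodingerSolution

theorem eq_zero_of_conj_mul_eq {w e z : ℂ} (hw : w ≠ 0) (he : conj e ≠ e)
    (h₁ : conj w * z = w * conj z) (h₂ : conj w * (e * z) = w * conj (e * z)) : z = 0 := by
  have h : conj w * z * (e - conj e) = 0 := by
    rw [map_mul] at h₂
    linear_combination h₂ - conj e * h₁
  simpa [hw, sub_ne_zero.2 he.symm] using h

theorem IsEig1.conjWronskian_ne_zero {a b : ℝ} (hab : a ≤ b) {V : ℝ → ℝ}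
    (hV : ContinuousOn V (Icc a b)) {lam θ : ℝ} (hθ : Real.sin θ ≠ 0) {u u' u'' : ℝ → ℂ}
    (h : IsEig1 a b V lam θ u u' u'') (hne : ∃ x ∈ Icc a b, u x ≠ 0) :
    conjWronskian u u' u u' a ≠ 0 := by
  obtain ⟨x₀, hx₀, hux₀⟩ := hne
  have hsol := h.isSchrodingerSolution
  have ha : a ∈ Icc a b := left_mem_Icc.2 hab
  have hb : b ∈ Icc a b := right_mem_Icc.2 hab
  have he : conj (exp (θ * I)) ≠ exp (θ * I) := by
    rwa [Ne, conj_eq_iff_im, exp_ofReal_mul_I_im]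
  intro hW
  have hWx₀ := hsol.conjWronskian_self_eq hx₀
  rw [hW, conjWronskian] at hWx₀
  have hD := ((hsol.const_mul (conj (u x₀))).sub (hsol.star.const_mul (u x₀))).eqOn_zero hV hx₀
    (by ring) (by linear_combination -hWx₀)
  simp only [EqOn, Pi.zero_apply, sub_eq_zero] at hD
  have hua : u a = 0 := eq_zero_of_conj_mul_eq hux₀ he (hD.1 ha) (h.2.2.2.1 ▸ hD.1 hb)
  have hu'a : u' a = 0 := eq_zero_of_conj_mul_eq hux₀ he (hD.2 ha) (h.2.2.2.2 ▸ hD.2 hb)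
  exact hux₀ ((hsol.eqOn_zero hV ha hua hu'a).1 hx₀)

theorem HasDerivAt.mul_of_eq_zero_of_continuousAt {𝕜 A : Type*} [NontriviallyNormedField 𝕜]
    [NormedRing A] [NormedAlgebra 𝕜 A] {f g : 𝕜 → A} {f' : A} {x : 𝕜}
    (hf : HasDerivAt f f' x) (hfx : f x = 0) (hg : ContinuousAt g x) :
    HasDerivAt (fun y => f y * g y) (f' * g x) x := by
  rw [hasDerivAt_iff_tendsto_slope] at hf ⊢
  refine (hf.mul (hg.tendsto.mono_left nhdsWithin_le_nhds)).congr fun y => ?_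
  simp only [slope_def_module, hfx, zero_mul, sub_zero, smul_mul_assoc]

theorem HasDerivAt.eq_cexp_mul_of_eventuallyEq {p q : ℝ → ℂ} {p' q' : ℂ} {θ : ℝ}
    (hp : HasDerivAt p p' θ) (hq : HasDerivAt q q' θ)
    (hpq : ∀ᶠ η in 𝓝 θ, q η = Complex.exp (↑η * I) * p η) :
    q' = Complex.exp (↑θ * I) * (I * p θ + p') := by
  have hexp : HasDerivAt (fun η : ℝ => Complex.exp (↑η * I)) (Complex.exp (↑θ * I) * I) θ := by
    simpa using ((hasDerivAt_id θ).ofReal_comp.mul_const I).cexp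
  exact hq.unique (((hexp.mul hp).congr_of_eventuallyEq hpq).congr_deriv (by ring))

theorem exists_eventually_norm_sub_le_mul {E : Type*} [NormedAddCommGroup E] [NormedSpace ℝ E]
    {f f' : ℝ → ℝ → E} {S K : Set ℝ} {θ : ℝ} (hS : S ∈ 𝓝 θ) (hK : IsCompact K)
    (hf : ∀ η ∈ S, ∀ x ∈ K, HasDerivWithinAt (fun t => f t x) (f' η x) S η)
    (hf' : ContinuousOn (fun p : ℝ × ℝ => f' p.1 p.2) (S ×ˢ K)) :
    ∃ M, ∀ᶠ η in 𝓝 θ, ∀ x ∈ K, ‖f η x - f θ x‖ ≤ M * |η - θ| := by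
  obtain ⟨c, d, hθ, hcd, hcdS⟩ := exists_Icc_mem_subset_of_mem_nhds hS
  obtain ⟨M, hM⟩ := (isCompact_Icc.prod hK).exists_bound_of_continuousOn
    (hf'.mono (prod_mono hcdS Subset.rfl))
  refine ⟨M, eventually_of_mem hcd fun η hη x hx => ?_⟩
  simpa [← Real.norm_eq_abs] using (convex_Icc c d).norm_image_sub_le_of_norm_hasDerivWithin_le
    (fun t ht => (hf t (hcdS ht) x hx).mono hcdS) (fun t ht => hM (t, x) ⟨ht, hx⟩) hθ hη

theorem tendsto_intervalIntegral_of_norm_sub_le_mul {E : Type*} [NormedAddCommGroup E]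
    [NormedSpace ℝ E] {F : ℝ → ℝ → E} {a b θ M : ℝ} (hab : a ≤ b)
    (hF : ∀ᶠ η in 𝓝 θ, ContinuousOn (F η) (Icc a b))
    (hM : ∀ᶠ η in 𝓝 θ, ∀ x ∈ Icc a b, ‖F η x - F θ x‖ ≤ M * |η - θ|) :
    Tendsto (fun η => ∫ x in a..b, F η x) (𝓝 θ) (𝓝 (∫ x in a..b, F θ x)) := by
  have hlim : Tendsto (fun η => M * |η - θ| * |b - a|) (𝓝 θ) (𝓝 0) := by
    have hcont : Continuous fun η => M * |η - θ| * |b - a| := by fun_prop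
    simpa using hcont.tendsto θ
  refine tendsto_iff_norm_sub_tendsto_zero.2
    (squeeze_zero' (Eventually.of_forall fun _ => norm_nonneg _) ?_ hlim)
  have hθ := hF.self_of_nhds
  filter_upwards [hF, hM] with η hη hηM
  rw [← intervalIntegral.integral_sub (hη.intervalIntegrable_of_Icc hab)
    (hθ.intervalIntegrable_of_Icc hab)]
  refine intervalIntegral.norm_integral_le_of_norm_le_const fun x hx => hηM x ?_
  rw [uIoc_of_le hab] at hx
  exact Ioc_subset_Icc_self hx

theorem IsBranch1.continuousAt_integral_mul_conj {a b : ℝ} (hab : a ≤ b) {V : ℝ → ℝ}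
    {θ₁ θ₂ : ℝ} {lam lam' : ℝ → ℝ} {u ux uxx uθ uθx : ℝ → ℝ → ℂ}
    (hbr : IsBranch1 a b V θ₁ θ₂ lam lam' u ux uxx uθ uθx) {θ : ℝ} (hθ : θ ∈ Ioo θ₁ θ₂) :
    ContinuousAt (fun η => ∫ x in a..b, u θ x * conj (u η x)) θ := by
  obtain ⟨-, heig, huθ, -, hcont, -⟩ := hbr
  have hS : Ioo θ₁ θ₂ ∈ 𝓝 θ := Ioo_mem_nhds hθ.1 hθ.2
  have hu := fun η (hη : η ∈ Ioo θ₁ θ₂) => (heig η hη).isSchrodingerSolution.continuousOn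
  obtain ⟨M, hM⟩ := exists_eventually_norm_sub_le_mul hS isCompact_Icc huθ hcont
  obtain ⟨C, hC⟩ := isCompact_Icc.exists_bound_of_continuousOn (hu θ hθ)
  refine tendsto_intervalIntegral_of_norm_sub_le_mul (M := C * M) hab
    (eventually_of_mem hS fun η hη => (hu θ hθ).mul (hu η hη).star) ?_
  filter_upwards [hM] with η hη x hx
  rw [← mul_sub, ← map_sub, norm_mul, RCLike.norm_conj, mul_assoc]
  exact mul_le_mul (hC x hx) (hη x hx) (norm_nonneg _) ((norm_nonneg _).trans (hC x hx))

theorem IsBranch1.deriv_mul_integral_normSq {a b : ℝ} (hab : a ≤ b) {V : ℝ → ℝ} {θ₁ θ₂ : ℝ}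
    {lam lam' : ℝ → ℝ} {u ux uxx uθ uθx : ℝ → ℝ → ℂ}
    (hbr : IsBranch1 a b V θ₁ θ₂ lam lam' u ux uxx uθ uθx) {θ : ℝ} (hθ : θ ∈ Ioo θ₁ θ₂) :
    (lam' θ : ℂ) * ((∫ x in a..b, normSq (u θ x) : ℝ) : ℂ) =
      I * conjWronskian (u θ) (ux θ) (u θ) (ux θ) a := by
  have hG := hbr.continuousAt_integral_mul_conj hab hθ
  obtain ⟨hlam, heig, huθ, huθx, -⟩ := hbr
  have hS : Ioo θ₁ θ₂ ∈ 𝓝 θ := Ioo_mem_nhds hθ.1 hθ.2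
  have ha : a ∈ Icc a b := left_mem_Icc.2 hab
  have hb : b ∈ Icc a b := right_mem_Icc.2 hab
  have hsol := fun η (hη : η ∈ Ioo θ₁ θ₂) => (heig η hη).isSchrodingerSolution
  let G η := ∫ x in a..b, u θ x * conj (u η x)
  let B η := conjWronskian (u θ) (ux θ) (u η) (ux η) b - conjWronskian (u θ) (ux θ) (u η) (ux η) a
  have hGB : ∀ᶠ η in 𝓝 θ, B η = ((lam θ : ℂ) - lam η) * G η := eventually_of_mem hS fun η hη =>
    ((hsol θ hθ).integral_mul_conj hab (hsol η hη)).symm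
  have hB_green : HasDerivAt B (-(lam' θ : ℂ) * G θ) θ :=
    ((((hlam θ hθ).hasDerivAt hS).ofReal_comp.const_sub (lam θ : ℂ)).mul_of_eq_zero_of_continuousAt
      (sub_self _) hG).congr_of_eventuallyEq hGB
  have hW : ∀ x ∈ Icc a b, HasDerivAt (fun η => conjWronskian (u θ) (ux θ) (u η) (ux η) x)
      (conjWronskian (u θ) (ux θ) (uθ θ) (uθx θ) x) θ := fun x hx =>
    (((huθx θ hθ x hx).hasDerivAt hS).star.const_mul (u θ x)).sub
      (((huθ θ hθ x hx).hasDerivAt hS).star.const_mul (ux θ x))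
  have hB_bdry := (hW b hb).sub (hW a ha)
  have huθb := ((huθ θ hθ a ha).hasDerivAt hS).eq_cexp_mul_of_eventuallyEq
    ((huθ θ hθ b hb).hasDerivAt hS) (eventually_of_mem hS fun η hη => (heig η hη).2.2.2.1)
  have huθxb := ((huθx θ hθ a ha).hasDerivAt hS).eq_cexp_mul_of_eventuallyEq
    ((huθx θ hθ b hb).hasDerivAt hS) (eventually_of_mem hS fun η hη => (heig η hη).2.2.2.2)
  have he : Complex.exp (θ * I) * conj (Complex.exp (θ * I)) = 1 := by
    rw [mul_conj, normSq_eq_norm_sq, norm_exp_ofReal_mul_I]; norm_num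
  have hGθ : G θ = ((∫ x in a..b, normSq (u θ x) : ℝ) : ℂ) := by
    rw [← intervalIntegral.integral_ofReal]; simp only [G, mul_conj]
  rw [← hGθ]
  have hderiv := hB_green.unique hB_bdry
  simp only [conjWronskian, (heig θ hθ).2.2.2.1, (heig θ hθ).2.2.2.2, huθb, huθxb, map_mul,
    map_add, conj_I] at hderiv ⊢
  linear_combination -hderiv - (u θ a * (-I * conj (ux θ a) + conj (uθx θ a)) -
    ux θ a * (-I * conj (u θ a) + conj (uθ θ a))) * he

theorem strictMonoOn_or_strictAntiOn_of_hasDerivWithinAt_ne_zero {s : Set ℝ} (hs : Convex ℝ s)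
    (hso : IsOpen s) {f f' : ℝ → ℝ} (hf : ∀ x ∈ s, HasDerivWithinAt f (f' x) s x)
    (hf' : ∀ x ∈ s, f' x ≠ 0) : StrictMonoOn f s ∨ StrictAntiOn f s := by
  have hcont : ContinuousOn f s := fun x hx => (hf x hx).continuousWithinAt
  rcases hasDerivWithinAt_forall_lt_or_forall_gt_of_forall_ne hs hf hf' with hneg | hpos
  · exact .inr (strictAntiOn_of_hasDerivWithinAt_neg hs hcont (by rwa [hso.interior_eq])
      (by rwa [hso.interior_eq]))
  · exact .inl (strictMonoOn_of_hasDerivWithinAt_pos hs hcont (by rwa [hso.interior_eq])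
      (by rwa [hso.interior_eq]))

theorem scalar_eigenvalue_strictly_monotone_general (a b : ℝ) (hab : a < b)
    (V : ℝ → ℝ) (hVcont : ContinuousOn V (Icc a b))
    (θ₁ θ₂ : ℝ)
    (hsub : Ioo θ₁ θ₂ ⊆ Ioo (0 : ℝ) Real.pi ∨ Ioo θ₁ θ₂ ⊆ Ioo Real.pi (2 * Real.pi))
    (lam lam' : ℝ → ℝ) (u ux uxx uθ uθx : ℝ → ℝ → ℂ)
    (hbranch : IsBranch1 a b V θ₁ θ₂ lam lam' u ux uxx uθ uθx)
    (hne : ∀ θ ∈ Ioo θ₁ θ₂, ∃ x ∈ Icc a b, u θ x ≠ 0) :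
    StrictMonoOn lam (Ioo θ₁ θ₂) ∨ StrictAntiOn lam (Ioo θ₁ θ₂) := by
  have hsin : ∀ θ ∈ Ioo θ₁ θ₂, Real.sin θ ≠ 0 := by
    rcases hsub with h | h <;> intro θ hθ <;> obtain ⟨h₁, h₂⟩ := h hθ
    · exact (Real.sin_pos_of_pos_of_lt_pi h₁ h₂).ne'
    · rw [← Real.sin_sub_two_pi]
      exact (Real.sin_neg_of_neg_of_neg_pi_lt (by linarith) (by linarith)).ne
  refine strictMonoOn_or_strictAntiOn_of_hasDerivWithinAt_ne_zero (convex_Ioo θ₁ θ₂) isOpen_Ioo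
    hbranch.1 fun θ hθ hzero => ?_
  apply (hbranch.2.1 θ hθ).conjWronskian_ne_zero hab.le hVcont (hsin θ hθ) (hne θ hθ)
  simpa [hzero] using (hbranch.deriv_mul_integral_normSq hab.le hθ).symm

/-- for a continuous scalar potential (`n = 1`), if `(θ₁,θ₂) ⊆ (0,π)` or
`(θ₁,θ₂) ⊆ (π,2π)` and `(lam, u)` is a C¹ eigenvalue branch on `(θ₁,θ₂)` with `u(θ,·)`
not identically zero for each `θ`, then `lam` is strictly monotone on `(θ₁,θ₂)`. -/
theorem scalar_eigenvalue_strictly_monotone (a b : ℝ) (hab : a < b)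
    (V : ℝ → ℝ) (hVcont : ContinuousOn V (Icc a b))
    (θ₁ θ₂ : ℝ) (h12 : θ₁ < θ₂)
    (hsub : Ioo θ₁ θ₂ ⊆ Ioo (0 : ℝ) Real.pi ∨ Ioo θ₁ θ₂ ⊆ Ioo Real.pi (2 * Real.pi))
    (lam lam' : ℝ → ℝ) (u ux uxx uθ uθx : ℝ → ℝ → ℂ)
    (hbranch : IsBranch1 a b V θ₁ θ₂ lam lam' u ux uxx uθ uθx)
    (hne : ∀ θ ∈ Ioo θ₁ θ₂, ∃ x ∈ Icc a b, u θ x ≠ 0) :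
    StrictMonoOn lam (Ioo θ₁ θ₂) ∨ StrictAntiOn lam (Ioo θ₁ θ₂) :=
  scalar_eigenvalue_strictly_monotone_general a b hab V hVcont θ₁ θ₂ hsub lam lam' u ux uxx uθ uθx
    hbranch hne
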